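/- arXiv:2312.13658 — 2 statements merged into one kernel-verified Lean document; each statement's English description precedes it below -/
import Mathlib

section
/- Theorem 1 (sufficient condition for sample-based i-IOSS): Let the system x(t+1) = f(x(t), w(t)), y(t) = h(x(t)) be i-IOSS with functions β ∈ 𝒦ℒ and γ₁, γ₂ ∈ 𝒦, let h be 𝒦-continuous, and let K be a sampling set. If there exist γ_w, γ_h ∈ 𝒦 and a finite time t* ∈ ℕ such that for any two initial conditions x₀₁, x₀₂, any two input sequences w₁, w₂, every K_i ∈ K, and all t ≥ t*, |Δh(Δx(t))| ≤ γ_h(sup_{τ∈K_i, τ<t} |Δh(Δx(τ))|) ⊕ γ_w(sup_{0≤τ<t} |Δw(τ)|), then the system is sample-based i-IOSS with respect to K. -/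
open Set Filter

noncomputable section

/-- `Vec m` is `ℝ^m` with the Euclidean norm. -/
abbrev Vec (m : ℕ) := EuclideanSpace ℝ (Fin m)

/-- A function `φ : ℝ≥0 → ℝ≥0` is of class 𝒦 (modeled on `ℝ`, restricted to `[0,∞)`):
continuous, strictly increasing and `φ 0 = 0`. -/
def IsClassK (φ : ℝ → ℝ) : Prop :=
  ContinuousOn φ (Ici 0) ∧ StrictMonoOn φ (Ici 0) ∧ φ 0 = 0

/-- A function `σ : ℕ → ℝ≥0` is of class ℒ: non-increasing with limit `0`. -/
def IsClassL (σ : ℕ → ℝ) : Prop :=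
  (∀ t, 0 ≤ σ t) ∧ Antitone σ ∧ Tendsto σ atTop (nhds 0)

/-- Class 𝒦ℒ. -/
def IsClassKL (β : ℝ → ℕ → ℝ) : Prop :=
  (∀ t, IsClassK fun s => β s t) ∧ ∀ s, 0 ≤ s → IsClassL fun t => β s t

/-- Solution map of `x(t+1) = f(x(t), w(t))`, `x(0) = x₀`. -/
def sol {n q : ℕ} (f : Vec n → Vec q → Vec n) (x0 : Vec n) (w : ℕ → Vec q) : ℕ → Vec n
  | 0 => x0
  | t + 1 => f (sol f x0 w t) (w t)

/-- `|Δx(t)|`. -/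
def nDx {n q : ℕ} (f : Vec n → Vec q → Vec n) (x01 x02 : Vec n) (w1 w2 : ℕ → Vec q)
    (t : ℕ) : ℝ :=
  ‖sol f x01 w1 t - sol f x02 w2 t‖

/-- `|Δh(Δx(t))|`. -/
def nDy {n q p : ℕ} (f : Vec n → Vec q → Vec n) (h : Vec n → Vec p)
    (x01 x02 : Vec n) (w1 w2 : ℕ → Vec q) (t : ℕ) : ℝ :=
  ‖h (sol f x01 w1 t) - h (sol f x02 w2 t)‖

/-- `|Δw(t)|`. -/
def nDw {q : ℕ} (w1 w2 : ℕ → Vec q) (t : ℕ) : ℝ := ‖w1 t - w2 t‖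

/-- `sup_{0 ≤ τ < t} g τ` (empty sup is `0` by the `Real.sSup` convention). -/
def supLt (t : ℕ) (g : ℕ → ℝ) : ℝ := sSup (g '' {τ | τ < t})

/-- `sup_{τ ∈ S, τ < t} g τ`. -/
def supMem (S : Set ℕ) (t : ℕ) (g : ℕ → ℝ) : ℝ := sSup (g '' {τ | τ ∈ S ∧ τ < t})

/-- Time-discounted max over `0 ≤ τ < t` of `β (g τ) (t - τ - 1)`. -/
def dmaxLt (t : ℕ) (g : ℕ → ℝ) (β : ℝ → ℕ → ℝ) : ℝ :=
  sSup ((fun τ => β (g τ) (t - τ - 1)) '' {τ | τ < t})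

/-- Time-discounted max over `τ ∈ S, τ < t` of `β (g τ) (t - τ - 1)`. -/
def dmaxMem (S : Set ℕ) (t : ℕ) (g : ℕ → ℝ) (β : ℝ → ℕ → ℝ) : ℝ :=
  sSup ((fun τ => β (g τ) (t - τ - 1)) '' {τ | τ ∈ S ∧ τ < t})

/-- `t^i_j = δ_i + ⋯ + δ_{i+j-1}` (the sequence `δ` is 1-based; `δ 0` is unused). -/
def sampT (δ : ℕ → ℕ) (i j : ℕ) : ℕ := ∑ r ∈ Finset.range j, δ (i + r)

/-- The sampling set `K_i = {t^i_j : j ≥ 1}`. -/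
def sampSet (δ : ℕ → ℕ) (i : ℕ) : Set ℕ := {m | ∃ j, 1 ≤ j ∧ m = sampT δ i j}

/-- The i-IOSS bound with given comparison functions. -/
def iIOSSBound {n q p : ℕ} (f : Vec n → Vec q → Vec n) (h : Vec n → Vec p)
    (β : ℝ → ℕ → ℝ) (γ1 γ2 : ℝ → ℝ) : Prop :=
  ∀ x01 x02 w1 w2 t,
    nDx f x01 x02 w1 w2 t ≤
      max (β ‖x01 - x02‖ t)
        (max (γ1 (supLt t (nDw w1 w2))) (γ2 (supLt t (nDy f h x01 x02 w1 w2))))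

/-- The sample-based i-IOSS bound w.r.t. the sampling set generated by `δ`. -/
def sampledIOSSBound {n q p : ℕ} (f : Vec n → Vec q → Vec n) (h : Vec n → Vec p)
    (δ : ℕ → ℕ) (β : ℝ → ℕ → ℝ) (γ1 γ2 : ℝ → ℝ) : Prop :=
  ∀ i, 1 ≤ i → ∀ x01 x02 w1 w2 t,
    nDx f x01 x02 w1 w2 t ≤
      max (β ‖x01 - x02‖ t)
        (max (γ1 (supLt t (nDw w1 w2)))
             (γ2 (supMem (sampSet δ i) t (nDy f h x01 x02 w1 w2))))

/-- The sample-based i-IOSS bound on an input set `W`. -/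
def sampledIOSSBoundOn {n q p : ℕ} (f : Vec n → Vec q → Vec n) (h : Vec n → Vec p)
    (W : Set (ℕ → Vec q)) (δ : ℕ → ℕ) (β : ℝ → ℕ → ℝ) (γ1 γ2 : ℝ → ℝ) : Prop :=
  ∀ i, 1 ≤ i → ∀ x01 x02, ∀ w1 ∈ W, ∀ w2 ∈ W, ∀ t,
    nDx f x01 x02 w1 w2 t ≤
      max (β ‖x01 - x02‖ t)
        (max (γ1 (supLt t (nDw w1 w2)))
             (γ2 (supMem (sampSet δ i) t (nDy f h x01 x02 w1 w2))))

/-- The sample-based time-discounted i-IOSS bound. -/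
def sampledTDBound {n q p : ℕ} (f : Vec n → Vec q → Vec n) (h : Vec n → Vec p)
    (δ : ℕ → ℕ) (βx βu βy : ℝ → ℕ → ℝ) : Prop :=
  ∀ i, 1 ≤ i → ∀ x01 x02 w1 w2 t,
    nDx f x01 x02 w1 w2 t ≤
      max (βx ‖x01 - x02‖ t)
        (max (dmaxLt t (nDw w1 w2) βu)
             (dmaxMem (sampSet δ i) t (nDy f h x01 x02 w1 w2) βy))

/-- The sample-based time-discounted i-IOSS bound on an input set `W`. -/
def sampledTDBoundOn {n q p : ℕ} (f : Vec n → Vec q → Vec n) (h : Vec n → Vec p)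
    (W : Set (ℕ → Vec q)) (δ : ℕ → ℕ) (βx βu βy : ℝ → ℕ → ℝ) : Prop :=
  ∀ i, 1 ≤ i → ∀ x01 x02, ∀ w1 ∈ W, ∀ w2 ∈ W, ∀ t,
    nDx f x01 x02 w1 w2 t ≤
      max (βx ‖x01 - x02‖ t)
        (max (dmaxLt t (nDw w1 w2) βu)
             (dmaxMem (sampSet δ i) t (nDy f h x01 x02 w1 w2) βy))

/-- `(x₀₁, x₀₂, w₁, w₂)` generates a pair of i-ISS trajectories relative to `(β, γ1, σ1)`. -/
def pairISS {n q : ℕ} (f : Vec n → Vec q → Vec n) (β : ℝ → ℕ → ℝ) (γ1 : ℝ → ℝ)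
    (σ1 : ℕ → ℝ) (x01 x02 : Vec n) (w1 w2 : ℕ → Vec q) : Prop :=
  ∀ t, nDx f x01 x02 w1 w2 t ≤
    max (β ‖x01 - x02‖ t)
      (sSup ((fun τ => γ1 (nDw w1 w2 τ) * σ1 (t - τ - 1)) '' {τ | τ < t}))

/-!
On the first `T = tstar` steps the outputs cannot be compared with the samples, but a finite
number of applications of i-IOSS and of `|Δh| ≤ α_h(|Δx|)` bounds them by a class-𝒦 function of
`|Δx₀| ⊕ sup|Δw|`. From time `T` on, the hypothesis bounds every output difference by
`γ_h(sampled outputs) ⊕ γ_w(inputs)`, so restarting the i-IOSS estimate at time `T` from the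
state `x(T)`, whose difference is controlled by the finite-horizon bound, gives the
sample-based estimate; the transient `t < T` is absorbed into the 𝒦ℒ function.
-/

section Suprema

variable {g : ℕ → ℝ} {S : Set ℕ} {t : ℕ}

lemma le_supLt {τ : ℕ} (hτ : τ < t) : g τ ≤ supLt t g :=
  le_csSup ((finite_Iio t).image g).bddAbove ⟨τ, hτ, rfl⟩

lemma supLt_le {a : ℝ} (ha : 0 ≤ a) (h : ∀ τ < t, g τ ≤ a) : supLt t g ≤ a :=
  Real.sSup_le (by rintro _ ⟨τ, hτ, rfl⟩; exact h τ hτ) ha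

lemma supLt_nonneg (hg : ∀ τ, 0 ≤ g τ) : 0 ≤ supLt t g :=
  Real.sSup_nonneg (by rintro _ ⟨τ, -, rfl⟩; exact hg τ)

lemma supLt_mono (hg : ∀ τ, 0 ≤ g τ) {t' : ℕ} (htt' : t ≤ t') : supLt t g ≤ supLt t' g :=
  supLt_le (supLt_nonneg hg) fun _ hτ => le_supLt (hτ.trans_le htt')

lemma le_supMem {τ : ℕ} (hτS : τ ∈ S) (hτ : τ < t) : g τ ≤ supMem S t g :=
  le_csSup (((finite_Iio t).subset fun _ h => h.2).image g).bddAbove ⟨τ, ⟨hτS, hτ⟩, rfl⟩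

lemma supMem_le {a : ℝ} (ha : 0 ≤ a) (h : ∀ τ ∈ S, τ < t → g τ ≤ a) : supMem S t g ≤ a :=
  Real.sSup_le (by rintro _ ⟨τ, ⟨hτS, hτ⟩, rfl⟩; exact h τ hτS hτ) ha

lemma supMem_nonneg (hg : ∀ τ, 0 ≤ g τ) : 0 ≤ supMem S t g :=
  Real.sSup_nonneg (by rintro _ ⟨τ, -, rfl⟩; exact hg τ)

lemma supMem_mono (hg : ∀ τ, 0 ≤ g τ) {t' : ℕ} (htt' : t ≤ t') :
    supMem S t g ≤ supMem S t' g :=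
  supMem_le (supMem_nonneg hg) fun _ hτS hτ => le_supMem hτS (hτ.trans_le htt')

end Suprema

namespace IsClassK

variable {φ ψ : ℝ → ℝ}

lemma mono (hφ : IsClassK φ) {a b : ℝ} (ha : 0 ≤ a) (hab : a ≤ b) : φ a ≤ φ b :=
  hφ.2.1.monotoneOn ha (ha.trans hab) hab

lemma nonneg (hφ : IsClassK φ) {s : ℝ} (hs : 0 ≤ s) : 0 ≤ φ s :=
  hφ.2.2 ▸ hφ.mono le_rfl hs

lemma map_max (hφ : IsClassK φ) {a b : ℝ} (ha : 0 ≤ a) (hb : 0 ≤ b) :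
    φ (max a b) = max (φ a) (φ b) :=
  hφ.2.1.monotoneOn.map_max ha hb

lemma comp (hφ : IsClassK φ) (hψ : IsClassK ψ) : IsClassK (φ ∘ ψ) := by
  have hmaps : MapsTo ψ (Ici 0) (Ici 0) := fun _ hs => hψ.nonneg hs
  exact ⟨hφ.1.comp hψ.1 hmaps, hφ.2.1.comp hψ.2.1 hmaps, by simp [hψ.2.2, hφ.2.2]⟩

protected lemma max (hφ : IsClassK φ) (hψ : IsClassK ψ) :
    IsClassK fun s => max (φ s) (ψ s) :=
  ⟨ContinuousOn.sup hφ.1 hψ.1,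
    fun _ ha _ hb hab => max_lt_max (hφ.2.1 ha hb hab) (hψ.2.1 ha hb hab),
    by simp [hφ.2.2, hψ.2.2]⟩

end IsClassK

namespace IsClassKL

variable {β : ℝ → ℕ → ℝ}

lemma le_apply_zero (hβ : IsClassKL β) {s : ℝ} (hs : 0 ≤ s) (t : ℕ) : β s t ≤ β s 0 :=
  (hβ.2 s hs).2.1 t.zero_le

lemma apply_max_le (hβ : IsClassKL β) {a b : ℝ} (ha : 0 ≤ a) (hb : 0 ≤ b) (t : ℕ) :
    β (max a b) t ≤ max (β a t) (β b 0) := by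
  rw [(hβ.1 t).map_max ha hb]
  exact max_le_max le_rfl (hβ.le_apply_zero hb t)

end IsClassKL

/-- Both subtractions are truncated: for `t < T` the first summand is `β (ρ r) 0` and the
second one is at least `ρ r`; for `t ≥ T` the second one vanishes. -/
def delayedKL (β : ℝ → ℕ → ℝ) (ρ : ℝ → ℝ) (T : ℕ) (r : ℝ) (t : ℕ) : ℝ :=
  β (ρ r) (t - T) + (T - t : ℕ) * ρ r

section DelayedKL

variable {β : ℝ → ℕ → ℝ} {ρ : ℝ → ℝ} {T : ℕ}

lemma isClassKL_delayedKL (hβ : IsClassKL β) (hρ : IsClassK ρ) (T : ℕ) :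
    IsClassKL (delayedKL β ρ T) := by
  refine ⟨fun t => ⟨?_, ?_, ?_⟩, fun r hr => ⟨fun t => ?_, fun t t' htt' => ?_, ?_⟩⟩
  · exact ((hβ.1 (t - T)).comp hρ).1.add (continuousOn_const.mul hρ.1)
  · intro a ha b hb hab
    exact add_lt_add_of_lt_of_le ((hβ.1 (t - T)).comp hρ |>.2.1 ha hb hab)
      (mul_le_mul_of_nonneg_left (hρ.mono ha hab.le) (Nat.cast_nonneg _))
  · simp [delayedKL, hρ.2.2, (hβ.1 _).2.2]
  · exact add_nonneg ((hβ.2 _ (hρ.nonneg hr)).1 _)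
      (mul_nonneg (Nat.cast_nonneg _) (hρ.nonneg hr))
  · exact add_le_add ((hβ.2 _ (hρ.nonneg hr)).2.1 (Nat.sub_le_sub_right htt' T))
      (mul_le_mul_of_nonneg_right (by gcongr) (hρ.nonneg hr))
  · have hdecay : Tendsto (fun t => β (ρ r) (t - T)) atTop (nhds 0) :=
      (hβ.2 _ (hρ.nonneg hr)).2.2.comp (tendsto_sub_atTop_nat T)
    have htransient : (fun t : ℕ => ((T - t : ℕ) : ℝ) * ρ r) =ᶠ[atTop] fun _ => 0 :=
      eventually_atTop.2 ⟨T, fun t ht => by simp [Nat.sub_eq_zero_of_le ht]⟩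
    simpa [delayedKL] using hdecay.add (tendsto_const_nhds.congr' htransient.symm)

lemma le_delayedKL (hρ : IsClassK ρ) {r : ℝ} (hr : 0 ≤ r) (t : ℕ) :
    β (ρ r) (t - T) ≤ delayedKL β ρ T r t :=
  le_add_of_nonneg_right (mul_nonneg (Nat.cast_nonneg _) (hρ.nonneg hr))

lemma le_delayedKL_of_lt (hβ : IsClassKL β) (hρ : IsClassK ρ) {r : ℝ} (hr : 0 ≤ r) {t : ℕ}
    (ht : t < T) : ρ r ≤ delayedKL β ρ T r t := by
  have hone : (1 : ℝ) ≤ (T - t : ℕ) := by exact_mod_cast Nat.sub_pos_of_lt ht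
  unfold delayedKL
  nlinarith [(hβ.2 _ (hρ.nonneg hr)).1 (t - T), hρ.nonneg hr]

end DelayedKL

lemma sol_add {n q : ℕ} (f : Vec n → Vec q → Vec n) (x0 : Vec n) (w : ℕ → Vec q) (a k : ℕ) :
    sol f x0 w (k + a) = sol f (sol f x0 w a) (fun m => w (m + a)) k := by
  induction k with
  | zero => simp [sol]
  | succ k ih => rw [Nat.add_right_comm, sol, ih, sol]

/-- `outputGain … k` bounds `sup_{τ<k} |Δh(Δx(τ))|` and `stateGain … (outputGain … k)` bounds
`|Δx(k)|`, both as functions of `|Δx₀| ⊕ sup_{τ<k} |Δw(τ)|`. -/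
def stateGain (β : ℝ → ℕ → ℝ) (γ1 γ2 θ : ℝ → ℝ) (r : ℝ) : ℝ :=
  max (β r 0) (max (γ1 r) (γ2 (θ r)))

def outputGain (β : ℝ → ℕ → ℝ) (γ1 γ2 αh : ℝ → ℝ) : ℕ → ℝ → ℝ
  | 0 => id
  | k + 1 => fun r =>
      max (outputGain β γ1 γ2 αh k r) (αh (stateGain β γ1 γ2 (outputGain β γ1 γ2 αh k) r))

section Gains

variable {β : ℝ → ℕ → ℝ} {γ1 γ2 αh : ℝ → ℝ}

lemma isClassK_stateGain (hβ : IsClassKL β) (hγ1 : IsClassK γ1) (hγ2 : IsClassK γ2)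
    {θ : ℝ → ℝ} (hθ : IsClassK θ) : IsClassK (stateGain β γ1 γ2 θ) :=
  (hβ.1 0).max (hγ1.max (hγ2.comp hθ))

lemma isClassK_outputGain (hβ : IsClassKL β) (hγ1 : IsClassK γ1) (hγ2 : IsClassK γ2)
    (hαh : IsClassK αh) : ∀ k, IsClassK (outputGain β γ1 γ2 αh k)
  | 0 => ⟨continuousOn_id, strictMono_id.strictMonoOn _, rfl⟩
  | k + 1 =>
    have hk := isClassK_outputGain hβ hγ1 hγ2 hαh k
    hk.max (hαh.comp (isClassK_stateGain hβ hγ1 hγ2 hk))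

lemma outputGain_mono_index {k k' : ℕ} (hkk' : k ≤ k') (r : ℝ) :
    outputGain β γ1 γ2 αh k r ≤ outputGain β γ1 γ2 αh k' r :=
  monotone_nat_of_le_succ (f := fun k => outputGain β γ1 γ2 αh k r)
    (fun _ => le_max_left _ _) hkk'

end Gains

section System

variable {n q p : ℕ} {f : Vec n → Vec q → Vec n} {h : Vec n → Vec p} {β : ℝ → ℕ → ℝ}
  {γ1 γ2 : ℝ → ℝ} {x01 x02 : Vec n} {w1 w2 : ℕ → Vec q}

namespace iIOSSBound

lemma nDx_le_of_supLt_le (hIOSS : iIOSSBound f h β γ1 γ2) (hβ : IsClassKL β) (hγ1 : IsClassK γ1)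
    (hγ2 : IsClassK γ2) {t : ℕ} {r c : ℝ} (hs : ‖x01 - x02‖ ≤ r)
    (hu : supLt t (nDw w1 w2) ≤ r) (hy : supLt t (nDy f h x01 x02 w1 w2) ≤ c) :
    nDx f x01 x02 w1 w2 t ≤ max (β r 0) (max (γ1 r) (γ2 c)) :=
  (hIOSS x01 x02 w1 w2 t).trans <| max_le_max
    ((hβ.le_apply_zero (norm_nonneg _) t).trans ((hβ.1 0).mono (norm_nonneg _) hs))
    (max_le_max (hγ1.mono (supLt_nonneg fun _ => norm_nonneg _) hu)
      (hγ2.mono (supLt_nonneg fun _ => norm_nonneg _) hy))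

lemma nDx_le_restart (hIOSS : iIOSSBound f h β γ1 γ2) (hγ1 : IsClassK γ1)
    (hγ2 : IsClassK γ2) {a t : ℕ} (hat : a ≤ t) {c : ℝ} (hc : 0 ≤ c)
    (hy : ∀ τ, a ≤ τ → τ < t → nDy f h x01 x02 w1 w2 τ ≤ c) :
    nDx f x01 x02 w1 w2 t ≤
      max (β (nDx f x01 x02 w1 w2 a) (t - a)) (max (γ1 (supLt t (nDw w1 w2))) (γ2 c)) := by
  obtain ⟨k, rfl⟩ := Nat.exists_eq_add_of_le' hat
  rw [Nat.add_sub_cancel]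
  set w1' := fun m => w1 (m + a)
  set w2' := fun m => w2 (m + a)
  have hw : supLt k (nDw w1' w2') ≤ supLt (k + a) (nDw w1 w2) :=
    supLt_le (supLt_nonneg fun _ => norm_nonneg _) fun τ hτ =>
      le_supLt (g := nDw w1 w2) (Nat.add_lt_add_right hτ a)
  have hy' : supLt k (nDy f h (sol f x01 w1 a) (sol f x02 w2 a) w1' w2') ≤ c :=
    supLt_le hc fun τ hτ => by
      simpa only [nDy, sol_add] using hy (τ + a) (Nat.le_add_left a τ) (by omega)
  calc nDx f x01 x02 w1 w2 (k + a) = nDx f (sol f x01 w1 a) (sol f x02 w2 a) w1' w2' k := by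
        simp only [nDx, sol_add, w1', w2']
    _ ≤ _ := hIOSS _ _ _ _ k
    _ ≤ _ := max_le_max le_rfl <| max_le_max
        (hγ1.mono (supLt_nonneg fun _ => norm_nonneg _) hw)
        (hγ2.mono (supLt_nonneg fun _ => norm_nonneg _) hy')

end iIOSSBound

variable {αh : ℝ → ℝ}

lemma supLt_nDy_le_outputGain (hIOSS : iIOSSBound f h β γ1 γ2) (hβ : IsClassKL β)
    (hγ1 : IsClassK γ1) (hγ2 : IsClassK γ2) (hαh : IsClassK αh)
    (hKcont : ∀ x1 x2 : Vec n, ‖h x1 - h x2‖ ≤ αh ‖x1 - x2‖) (t : ℕ) :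
    supLt t (nDy f h x01 x02 w1 w2) ≤
      outputGain β γ1 γ2 αh t (max ‖x01 - x02‖ (supLt t (nDw w1 w2))) := by
  have hΘ := isClassK_outputGain hβ hγ1 hγ2 hαh
  induction t with
  | zero => exact supLt_le (le_max_of_le_left (norm_nonneg _)) (by simp)
  | succ t ih =>
    set r := max ‖x01 - x02‖ (supLt (t + 1) (nDw w1 w2))
    have hut : supLt t (nDw w1 w2) ≤ supLt (t + 1) (nDw w1 w2) :=
      supLt_mono (fun _ => norm_nonneg _) t.le_succ
    have hy : supLt t (nDy f h x01 x02 w1 w2) ≤ outputGain β γ1 γ2 αh t r :=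
      ih.trans <| (hΘ t).mono (le_max_of_le_left (norm_nonneg _)) (max_le_max le_rfl hut)
    refine supLt_le ((hΘ _).nonneg (le_max_of_le_left (norm_nonneg _))) fun τ hτ => ?_
    rcases Nat.lt_succ_iff_lt_or_eq.1 hτ with hτ | rfl
    · exact (le_supLt hτ).trans (hy.trans (le_max_left _ _))
    · have hx : nDx f x01 x02 w1 w2 τ ≤ stateGain β γ1 γ2 (outputGain β γ1 γ2 αh τ) r :=
        hIOSS.nDx_le_of_supLt_le hβ hγ1 hγ2 (le_max_left _ _) (hut.trans (le_max_right _ _)) hy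
      exact (hKcont _ _).trans <| (hαh.mono (norm_nonneg _) hx).trans (le_max_right _ _)

lemma nDx_le_stateGain_outputGain (hIOSS : iIOSSBound f h β γ1 γ2) (hβ : IsClassKL β)
    (hγ1 : IsClassK γ1) (hγ2 : IsClassK γ2) (hαh : IsClassK αh)
    (hKcont : ∀ x1 x2 : Vec n, ‖h x1 - h x2‖ ≤ αh ‖x1 - x2‖) {t T : ℕ} (htT : t ≤ T) :
    nDx f x01 x02 w1 w2 t ≤
      stateGain β γ1 γ2 (outputGain β γ1 γ2 αh T) (max ‖x01 - x02‖ (supLt t (nDw w1 w2))) :=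
  hIOSS.nDx_le_of_supLt_le hβ hγ1 hγ2 (le_max_left _ _) (le_max_right _ _) <|
    (supLt_nDy_le_outputGain hIOSS hβ hγ1 hγ2 hαh hKcont t).trans (outputGain_mono_index htT _)

lemma nDx_le_delayedKL (hIOSS : iIOSSBound f h β γ1 γ2) (hβ : IsClassKL β)
    (hγ1 : IsClassK γ1) (hγ2 : IsClassK γ2) (hαh : IsClassK αh)
    (hKcont : ∀ x1 x2 : Vec n, ‖h x1 - h x2‖ ≤ αh ‖x1 - x2‖) {γw γh : ℝ → ℝ}
    (hγw : IsClassK γw) (hγh : IsClassK γh) {S : Set ℕ} {T : ℕ}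
    (hcond : ∀ t, T ≤ t → nDy f h x01 x02 w1 w2 t ≤
      max (γh (supMem S t (nDy f h x01 x02 w1 w2))) (γw (supLt t (nDw w1 w2)))) (t : ℕ) :
    nDx f x01 x02 w1 w2 t ≤
      max (delayedKL β (stateGain β γ1 γ2 (outputGain β γ1 γ2 αh T)) T
          (max ‖x01 - x02‖ (supLt t (nDw w1 w2))) t)
        (max (γ1 (supLt t (nDw w1 w2)))
          (γ2 (max (γh (supMem S t (nDy f h x01 x02 w1 w2))) (γw (supLt t (nDw w1 w2)))))) := by
  set R := stateGain β γ1 γ2 (outputGain β γ1 γ2 αh T)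
  set u := supLt t (nDw w1 w2)
  set M := supMem S t (nDy f h x01 x02 w1 w2)
  have hR : IsClassK R := isClassK_stateGain hβ hγ1 hγ2 (isClassK_outputGain hβ hγ1 hγ2 hαh T)
  have hr : 0 ≤ max ‖x01 - x02‖ u := le_max_of_le_left (norm_nonneg _)
  rcases lt_or_ge t T with htT | hTt
  · exact le_max_of_le_left <| (nDx_le_stateGain_outputGain hIOSS hβ hγ1 hγ2 hαh hKcont
      htT.le).trans (le_delayedKL_of_lt hβ hR hr htT)
  · have hxT : nDx f x01 x02 w1 w2 T ≤ R (max ‖x01 - x02‖ u) :=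
      (nDx_le_stateGain_outputGain hIOSS hβ hγ1 hγ2 hαh hKcont le_rfl).trans <|
        hR.mono (le_max_of_le_left (norm_nonneg _))
          (max_le_max le_rfl (supLt_mono (fun _ => norm_nonneg _) hTt))
    have hy : ∀ τ, T ≤ τ → τ < t → nDy f h x01 x02 w1 w2 τ ≤ max (γh M) (γw u) :=
      fun τ hTτ hτt => (hcond τ hTτ).trans <| max_le_max
        (hγh.mono (supMem_nonneg fun _ => norm_nonneg _)
          (supMem_mono (fun _ => norm_nonneg _) hτt.le))
        (hγw.mono (supLt_nonneg fun _ => norm_nonneg _)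
          (supLt_mono (fun _ => norm_nonneg _) hτt.le))
    refine (hIOSS.nDx_le_restart hγ1 hγ2 hTt
      (le_max_of_le_right (hγw.nonneg (supLt_nonneg fun _ => norm_nonneg _))) hy).trans ?_
    exact max_le_max (((hβ.1 _).mono (norm_nonneg _) hxT).trans (le_delayedKL hR hr t)) le_rfl

end System

theorem theorem1_sufficient_sample_based_iIOSS_general {n q p : ℕ}
    (f : Vec n → Vec q → Vec n) (h : Vec n → Vec p)
    (β : ℝ → ℕ → ℝ) (γ1 γ2 : ℝ → ℝ)
    (hβ : IsClassKL β) (hγ1 : IsClassK γ1) (hγ2 : IsClassK γ2)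
    (hiIOSS : iIOSSBound f h β γ1 γ2)
    (αh : ℝ → ℝ) (hαh : IsClassK αh)
    (hKcont : ∀ x1 x2 : Vec n, ‖h x1 - h x2‖ ≤ αh ‖x1 - x2‖)
    (δ : ℕ → ℕ)
    (γw γh : ℝ → ℝ) (tstar : ℕ) (hγw : IsClassK γw) (hγh : IsClassK γh)
    (hcond : ∀ (x01 x02 : Vec n) (w1 w2 : ℕ → Vec q) (i : ℕ), 1 ≤ i →
        ∀ t, tstar ≤ t →
          nDy f h x01 x02 w1 w2 t ≤
            max (γh (supMem (sampSet δ i) t (nDy f h x01 x02 w1 w2)))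
                (γw (supLt t (nDw w1 w2)))) :
    ∃ (β' : ℝ → ℕ → ℝ) (γ1' γ2' : ℝ → ℝ),
      IsClassKL β' ∧ IsClassK γ1' ∧ IsClassK γ2' ∧
        sampledIOSSBound f h δ β' γ1' γ2' := by
  set D := delayedKL β (stateGain β γ1 γ2 (outputGain β γ1 γ2 αh tstar)) tstar
  have hD : IsClassKL D := isClassKL_delayedKL hβ
    (isClassK_stateGain hβ hγ1 hγ2 (isClassK_outputGain hβ hγ1 hγ2 hαh tstar)) tstar
  refine ⟨D, fun r => max (D r 0) (max (γ1 r) (γ2 (γw r))), γ2 ∘ γh,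
    hD, (hD.1 0).max (hγ1.max (hγ2.comp hγw)), hγ2.comp hγh, ?_⟩
  intro i hi x01 x02 w1 w2 t
  have hu : 0 ≤ supLt t (nDw w1 w2) := supLt_nonneg fun _ => norm_nonneg _
  have hM : 0 ≤ supMem (sampSet δ i) t (nDy f h x01 x02 w1 w2) :=
    supMem_nonneg fun _ => norm_nonneg _
  have hbound := nDx_le_delayedKL hiIOSS hβ hγ1 hγ2 hαh hKcont hγw hγh
    (hcond x01 x02 w1 w2 i hi) t
  rw [hγ2.map_max (hγh.nonneg hM) (hγw.nonneg hu)] at hbound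
  refine hbound.trans ((max_le_max (hD.apply_max_le (norm_nonneg _) hu t) le_rfl).trans ?_)
  exact le_of_eq (by simp only [Function.comp_apply]; ac_rfl)

/-- **Theorem 1** (sufficient condition for sample-based i-IOSS). -/
theorem theorem1_sufficient_sample_based_iIOSS {n q p : ℕ}
    (f : Vec n → Vec q → Vec n) (h : Vec n → Vec p)
    (β : ℝ → ℕ → ℝ) (γ1 γ2 : ℝ → ℝ)
    (hβ : IsClassKL β) (hγ1 : IsClassK γ1) (hγ2 : IsClassK γ2)
    (hiIOSS : iIOSSBound f h β γ1 γ2)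
    (αh : ℝ → ℝ) (hαh : IsClassK αh)
    (hKcont : ∀ x1 x2 : Vec n, ‖h x1 - h x2‖ ≤ αh ‖x1 - x2‖)
    (δ : ℕ → ℕ) (δmax : ℕ) (hδ : ∀ i, 1 ≤ i → δ i ≤ δmax)
    (γw γh : ℝ → ℝ) (tstar : ℕ) (hγw : IsClassK γw) (hγh : IsClassK γh)
    (hcond : ∀ (x01 x02 : Vec n) (w1 w2 : ℕ → Vec q) (i : ℕ), 1 ≤ i →
        ∀ t, tstar ≤ t →
          nDy f h x01 x02 w1 w2 t ≤
            max (γh (supMem (sampSet δ i) t (nDy f h x01 x02 w1 w2)))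
                (γw (supLt t (nDw w1 w2)))) :
    ∃ (β' : ℝ → ℕ → ℝ) (γ1' γ2' : ℝ → ℝ),
      IsClassKL β' ∧ IsClassK γ1' ∧ IsClassK γ2' ∧
        sampledIOSSBound f h δ β' γ1' γ2' :=
  theorem1_sufficient_sample_based_iIOSS_general f h β γ1 γ2 hβ hγ1 hγ2 hiIOSS αh hαh hKcont δ γw γh
    tstar hγw hγh hcond
end
end

section
/- Unbounded violation time for the square-root 𝒦ℒ-bound (equation (40) of the paper): Let a > 1, c ≥ 1, λ > 0, and define β(s, t) = c·√s·e^{−λt} for 0 ≤ s < 1 and β(s, t) = c·s·e^{−λt} for s ≥ 1. Then for every T ∈ ℕ there exists s₀ ∈ (0, 1) such that for all s with 0 < s ≤ s₀ and all t ∈ ℕ with t ≤ T: aᵗ·s ≤ β(s, t). Hence the time at which the trajectory difference |Δx(t)| = aᵗ·|Δx₀| of the system x(t+1) = a·x(t) first exceeds β(|Δx₀|, t) grows unboundedly as |Δx₀| → 0, and no uniform bound T_β as in Assumption 2 exists for this β. -/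
open Set Filter

noncomputable section

open Real

theorem le_mul_sqrt_of_le_sq {s K : ℝ} (hs : 0 ≤ s) (hK : 0 ≤ K) (h : s ≤ K ^ 2) :
    s ≤ K * √s :=
  calc s = √s * √s := (mul_self_sqrt hs).symm
    _ ≤ K * √s := mul_le_mul_of_nonneg_right (sqrt_le_iff.mpr ⟨hK, h⟩) (sqrt_nonneg s)

/-- On the horizon `t ≤ T`, both the growth `aᵗ` and the decay `e^{-λt}` are worst at `t = T`,
so a single threshold on `√s` works for every such `t`. -/
theorem pow_mul_le_mul_sqrt_mul_exp {a c lam s : ℝ} {t T : ℕ} (ha : 1 ≤ a) (hc : 1 ≤ c)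
    (hlam : 0 ≤ lam) (ht : t ≤ T) (hs : 0 ≤ s) (hsT : s ≤ (exp (-lam * T) / a ^ T) ^ 2) :
    a ^ t * s ≤ c * √s * exp (-lam * t) := by
  have haT : 0 < a ^ T := pow_pos (zero_lt_one.trans_le ha) T
  calc a ^ t * s ≤ a ^ T * s := mul_le_mul_of_nonneg_right (pow_le_pow_right₀ ha ht) hs
    _ ≤ a ^ T * (exp (-lam * T) / a ^ T * √s) :=
        mul_le_mul_of_nonneg_left (le_mul_sqrt_of_le_sq hs (by positivity) hsT) haT.le
    _ = 1 * √s * exp (-lam * T) := by field_simp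
    _ ≤ c * √s * exp (-lam * t) := by
        gcongr ?_ * _ * exp ?_
        exact mul_le_mul_of_nonpos_left (Nat.cast_le.mpr ht) (neg_nonpos.mpr hlam)

/-- Unbounded violation time for the square-root 𝒦ℒ-bound (equation (40) of the paper):
for every horizon `T` the bound is satisfied up to time `T` for all sufficiently small
initial differences. -/
theorem sqrt_bound_unbounded_violation_time
    (a c lam : ℝ) (ha : 1 < a) (hc : 1 ≤ c) (hlam : 0 < lam) :
    ∀ T : ℕ, ∃ s0 : ℝ, 0 < s0 ∧ s0 < 1 ∧
      ∀ s : ℝ, 0 < s → s ≤ s0 → ∀ t : ℕ, t ≤ T →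
        a ^ t * s ≤
          (if s < 1 then c * Real.sqrt s * Real.exp (-lam * (t : ℝ))
           else c * s * Real.exp (-lam * (t : ℝ))) := by
  intro T
  have hs0 : min (1 / 2) ((exp (-lam * T) / a ^ T) ^ 2) < 1 :=
    (min_le_left _ _).trans_lt (by norm_num)
  refine ⟨_, lt_min (by norm_num) (by positivity), hs0, fun s hs hss0 t ht => ?_⟩
  rw [if_pos (hss0.trans_lt hs0)]
  exact pow_mul_le_mul_sqrt_mul_exp ha.le hc hlam.le ht hs.le (hss0.trans (min_le_right _ _))
end
end
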